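/- arXiv:1309.4026 — 6 statements merged into one kernel-verified Lean document; each statement's English description precedes it below -/
import Mathlib

section
/- Let M, N be natural numbers with 1 ≤ N < 2M, and define p ∈ ℝ by p = N(2M−N)/(2M) if 2M ≤ 2N and p = N/2 if 2M ≥ 2N (the two formulas agree when 2M = 2N). Then p/d_s(N,2M) + p/min(2M,2N) = 1; in particular, the point (p,p) of equation (11) lies on both boundary lines of the sum SDoF region of Theorem 1 and is its symmetric corner point (Remark 1). -/
/-! On the middle branch `p = N(K-N)/K` gives `p / ds N K = (N² + K(K-N))/K²` and
`p / K = N(K-N)/K²`, which add up to `K²/K²`; on the last branch `p = N/2` gives `3/4 + 1/4`. -/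

noncomputable def ds (N K : ℕ) : ℝ :=
  if K ≤ N then 0
  else if K ≤ 2 * N then
    (N : ℝ) * (K : ℝ) * ((K : ℝ) - (N : ℝ)) /
      ((N : ℝ) ^ 2 + (K : ℝ) * ((K : ℝ) - (N : ℝ)))
  else 2 * (N : ℝ) / 3

lemma ds_of_lt_of_le_two_mul {N K : ℕ} (hNK : N < K) (hK : K ≤ 2 * N) :
    ds N K = (N : ℝ) * K * (K - N) / ((N : ℝ) ^ 2 + K * (K - N)) := by
  rw [ds, if_neg hNK.not_ge, if_pos hK]

lemma ds_of_two_mul_lt {N K : ℕ} (hK : 2 * N < K) : ds N K = 2 * (N : ℝ) / 3 := by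
  rw [ds, if_neg (by omega), if_neg hK.not_ge]

lemma div_ds_add_div_eq_one_of_lt_of_le_two_mul {N K : ℕ} (hNK : N < K) (hK : K ≤ 2 * N) :
    (N : ℝ) * (K - N) / K / ds N K + (N : ℝ) * (K - N) / K / K = 1 := by
  have hN : (0 : ℝ) < N := by exact_mod_cast (by omega : 0 < N)
  have hKN : (0 : ℝ) < K - N := sub_pos.mpr (by exact_mod_cast hNK)
  have hK0 : (0 : ℝ) < K := by linarith
  rw [ds_of_lt_of_le_two_mul hNK hK]
  field_simp
  ring

lemma div_ds_add_div_eq_one_of_two_mul_lt {N K : ℕ} (hN : 1 ≤ N) (hK : 2 * N < K) :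
    (N : ℝ) / 2 / ds N K + (N : ℝ) / 2 / (2 * N) = 1 := by
  have hN0 : (N : ℝ) ≠ 0 := by positivity
  rw [ds_of_two_mul_lt hK]
  field_simp
  norm_num

/-- For 1 ≤ N < 2M, the symmetric point p (= N(2M−N)/(2M) if 2M ≤ 2N and
N/2 if 2M ≥ 2N) lies on both boundary lines: p/d_s(N,2M) + p/min(2M,2N) = 1. -/
theorem symmetric_corner_on_boundary (M N : ℕ) (hN : 1 ≤ N) (hM : N < 2 * M) :
    (if 2 * M ≤ 2 * N then (N : ℝ) * (2 * (M : ℝ) - (N : ℝ)) / (2 * (M : ℝ))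
      else (N : ℝ) / 2) / ds N (2 * M) +
    (if 2 * M ≤ 2 * N then (N : ℝ) * (2 * (M : ℝ) - (N : ℝ)) / (2 * (M : ℝ))
      else (N : ℝ) / 2) / min (2 * (M : ℝ)) (2 * (N : ℝ)) = 1 := by
  by_cases hMN : 2 * M ≤ 2 * N
  · have hmin : min (2 * (M : ℝ)) (2 * N) = 2 * M := min_eq_left (by exact_mod_cast hMN)
    rw [if_pos hMN, hmin]
    simpa using div_ds_add_div_eq_one_of_lt_of_le_two_mul hM hMN
  · have hmin : min (2 * (M : ℝ)) (2 * N) = 2 * N :=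
      min_eq_right (by exact_mod_cast (by omega : 2 * N ≤ 2 * M))
    rw [if_neg hMN, hmin]
    exact div_ds_add_div_eq_one_of_two_mul_lt hN (by omega)
end

section
/- Let M, N be natural numbers with 1 ≤ N, N < 2M and 2M ≤ 2N. Then N(2M−N)/M is the greatest element of the set {s ∈ ℝ : ∃ (x,y) ∈ C_SDoF(M,N), s = x + y}. (This is the case N ≤ 2M ≤ 2N of the total secure degrees of freedom formula, equation (12) of the paper.) -/
/-- Sum SDoF region of the (M,M,N,N) MIMO X-channel with asymmetric output feedback
and delayed CSIT (Theorem 1). -/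
noncomputable def CSDoF (M N : ℕ) : Set (ℝ × ℝ) :=
  {p | 0 ≤ p.1 ∧ 0 ≤ p.2 ∧
    p.1 / ds N (2 * M) + p.2 / min (2 * (M : ℝ)) (2 * (N : ℝ)) ≤ 1 ∧
    p.1 / min (2 * (M : ℝ)) (2 * (N : ℝ)) + p.2 / ds N (2 * M) ≤ 1}

/-! Summing the two constraints bounds `x + y` by the harmonic mean `2ab/(a+b)` of the two
intercepts, with equality on the diagonal point `x = y = ab/(a+b)`. For `C_SDoF(M,N)` with
`N ≤ 2M ≤ 2N` the intercepts are `d_s(N,2M)` and `2M`, and their harmonic mean simplifies to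
`N(2M−N)/M` because `N² + 2M(2M−N) + N(2M−N) = 4M²`. -/

def symmRegion (a b : ℝ) : Set (ℝ × ℝ) :=
  {p | 0 ≤ p.1 ∧ 0 ≤ p.2 ∧ p.1 / a + p.2 / b ≤ 1 ∧ p.1 / b + p.2 / a ≤ 1}

theorem CSDoF_eq_symmRegion (M N : ℕ) :
    CSDoF M N = symmRegion (ds N (2 * M)) (min (2 * (M : ℝ)) (2 * (N : ℝ))) :=
  rfl

theorem isGreatest_sum_symmRegion {a b : ℝ} (ha : 0 < a) (hb : 0 < b) :
    IsGreatest {s : ℝ | ∃ p ∈ symmRegion a b, s = p.1 + p.2} (2 * a * b / (a + b)) := by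
  have hab : 0 < a + b := add_pos ha hb
  constructor
  · set t := a * b / (a + b)
    have ht : 0 ≤ t := by positivity
    have hdiag : t / a + t / b = 1 := by
      simp only [t]; field_simp; ring
    refine ⟨(t, t), ⟨ht, ht, hdiag.le, by linarith⟩, ?_⟩
    simp only [t]; ring
  · rintro s ⟨⟨x, y⟩, ⟨-, -, hxy, hyx⟩, rfl⟩
    have hsum : (x + y) * (a + b) / (a * b) ≤ 2 := by
      calc (x + y) * (a + b) / (a * b) = (x / a + y / b) + (x / b + y / a) := by
            field_simp; ring
        _ ≤ 2 := by linarith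
    rw [div_le_iff₀ (by positivity)] at hsum
    rw [le_div_iff₀ hab]
    linarith

theorem ds_of_lt_of_le {N K : ℕ} (h1 : N < K) (h2 : K ≤ 2 * N) :
    ds N K = (N : ℝ) * K * (K - N) / (N ^ 2 + K * (K - N)) := by
  rw [ds, if_neg (by omega), if_pos h2]

theorem total_sdof_case_mid_general (M N : ℕ) (h1 : N < 2 * M)
    (h2 : 2 * M ≤ 2 * N) :
    IsGreatest {s : ℝ | ∃ p ∈ CSDoF M N, s = p.1 + p.2}
      ((N : ℝ) * (2 * (M : ℝ) - (N : ℝ)) / (M : ℝ)) := by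
  have hM : (0 : ℝ) < M := by exact_mod_cast (by omega : 0 < M)
  have h1' : (N : ℝ) < 2 * M := by exact_mod_cast h1
  have h2' : (M : ℝ) ≤ N := by exact_mod_cast (by omega : M ≤ N)
  have hN : (0 : ℝ) < N := hM.trans_le h2'
  have hmin : min (2 * (M : ℝ)) (2 * (N : ℝ)) = 2 * M := min_eq_left (by linarith)
  have hden : (0 : ℝ) < N ^ 2 + 2 * M * (2 * M - N) := by nlinarith
  have hds : ds N (2 * M) = N * (2 * M) * (2 * M - N) / (N ^ 2 + 2 * M * (2 * M - N)) := by
    rw [ds_of_lt_of_le (by omega) (by omega)]; push_cast; ring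
  have hds_pos : 0 < ds N (2 * M) := by
    rw [hds]; exact div_pos (mul_pos (mul_pos hN (by positivity)) (by linarith)) hden
  have hds_add : ds N (2 * M) + 2 * M = 8 * M ^ 3 / (N ^ 2 + 2 * M * (2 * M - N)) := by
    rw [hds]; field_simp; ring
  rw [CSDoF_eq_symmRegion, hmin]
  convert isGreatest_sum_symmRegion hds_pos (by positivity : (0 : ℝ) < 2 * M) using 1
  rw [hds_add, hds]
  field_simp
  ring

/-- For 1 ≤ N < 2M and 2M ≤ 2N, the maximal sum x + y over
C_SDoF(M,N) equals N(2M−N)/M. -/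
theorem total_sdof_case_mid (M N : ℕ) (hN : 1 ≤ N) (h1 : N < 2 * M)
    (h2 : 2 * M ≤ 2 * N) :
    IsGreatest {s : ℝ | ∃ p ∈ CSDoF M N, s = p.1 + p.2}
      ((N : ℝ) * (2 * (M : ℝ) - (N : ℝ)) / (M : ℝ)) :=
  total_sdof_case_mid_general M N h1 h2
end

section
/- Let M, N be natural numbers with 1 ≤ N ≤ M. Then N is the greatest element of the set {s ∈ ℝ : ∃ (x,y) ∈ C_SDoF(M,N), s = x + y}. (This is the case 2M ≥ 2N of the total secure degrees of freedom formula, equation (12) of the paper.) -/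
/-! The maximal sum `2ab/(a+b)` over the region below is the harmonic mean of `a` and `b`:
adding the two constraints gives `(x + y)(1/a + 1/b) ≤ 2`, with equality on the diagonal.
For `N ≤ M` the region `CSDoF M N` is this one with `a = 2N/3` and `b = 2N`. -/

def symmetricRegion (a b : ℝ) : Set (ℝ × ℝ) :=
  {p | 0 ≤ p.1 ∧ 0 ≤ p.2 ∧ p.1 / a + p.2 / b ≤ 1 ∧ p.1 / b + p.2 / a ≤ 1}

theorem isGreatest_sum_symmetricRegion {a b : ℝ} (ha : 0 < a) (hb : 0 < b) :
    IsGreatest {s : ℝ | ∃ p ∈ symmetricRegion a b, s = p.1 + p.2} (2 * a * b / (a + b)) := by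
  have hab : 0 < a + b := add_pos ha hb
  constructor
  · have hdiag : a * b / (a + b) / a + a * b / (a + b) / b = 1 := by
      field_simp
      ring
    refine ⟨(a * b / (a + b), a * b / (a + b)), ⟨by positivity, by positivity, ?_, ?_⟩, by ring⟩
    · exact hdiag.le
    · linarith
  · rintro s ⟨⟨x, y⟩, ⟨-, -, h₁, h₂⟩, rfl⟩
    rw [div_add_div _ _ ha.ne' hb.ne', div_le_one (mul_pos ha hb)] at h₁
    rw [div_add_div _ _ hb.ne' ha.ne', div_le_one (mul_pos hb ha)] at h₂
    rw [le_div_iff₀ hab]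
    linarith

theorem ds_two_mul_of_le {M N : ℕ} (hNM : N ≤ M) : ds N (2 * M) = 2 * (N : ℝ) / 3 := by
  unfold ds
  split_ifs with h₁ h₂
  · obtain rfl : N = 0 := by omega
    simp
  · obtain rfl : M = N := by omega
    have hM : (0 : ℝ) < M := by exact_mod_cast (show 0 < M by omega)
    push_cast
    field_simp
    ring
  · rfl

/-- For 1 ≤ N ≤ M, the maximal sum x + y over C_SDoF(M,N) equals N. -/
theorem total_sdof_case_high (M N : ℕ) (hN : 1 ≤ N) (hNM : N ≤ M) :
    IsGreatest {s : ℝ | ∃ p ∈ CSDoF M N, s = p.1 + p.2} (N : ℝ) := by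
  have hN₀ : (0 : ℝ) < N := by exact_mod_cast hN
  have hmin : min (2 * (M : ℝ)) (2 * (N : ℝ)) = 2 * N :=
    min_eq_right (by gcongr)
  have hregion : CSDoF M N = symmetricRegion (2 * N / 3) (2 * N) := by
    rw [CSDoF, ds_two_mul_of_le hNM, hmin]
    rfl
  have hmean : 2 * (2 * N / 3) * (2 * N) / (2 * N / 3 + 2 * N) = (N : ℝ) := by
    field_simp
    ring
  simpa only [hregion, hmean] using
    isGreatest_sum_symmetricRegion (a := 2 * N / 3) (b := 2 * N) (by positivity) (by positivity)
end

section
/- For all natural numbers N ≥ 1 and K, d_s^loc(N,K) ≤ d_s(N,K). Equivalently, for N ≤ K ≤ 2N one has K²(K−N)/(2N² + (K−N)(3K−N)) ≤ N·K·(K−N)/(N² + K(K−N)); this reduces to the cubic inequality K³ − 4K²N + 5KN² − 3N³ ≤ 0 on N ≤ K ≤ 2N. (This quantifies the SDoF loss incurred by the lack of delayed CSIT: the inner bound of Theorem 3 is no larger than the region of Theorem 1.) -/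
/-- d_s^loc(N,K): 0 if K ≤ N; K²·(K−N)/(2N² + (K−N)(3K−N)) if N ≤ K < 2N; 2N/3 if K ≥ 2N. -/
noncomputable def dsloc (N K : ℕ) : ℝ :=
  if K ≤ N then 0
  else if K < 2 * N then
    (K : ℝ) ^ 2 * ((K : ℝ) - (N : ℝ)) /
      (2 * (N : ℝ) ^ 2 + ((K : ℝ) - (N : ℝ)) * (3 * (K : ℝ) - (N : ℝ)))
  else 2 * (N : ℝ) / 3

theorem cubic_nonpos_of_le_of_le_two_mul {n k : ℝ} (hnk : n ≤ k) (hk : k ≤ 2 * n) :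
    k ^ 3 - 4 * k ^ 2 * n + 5 * k * n ^ 2 - 3 * n ^ 3 ≤ 0 := by
  have hn : 0 ≤ n := by linarith
  have factor : k ^ 3 - 4 * k ^ 2 * n + 5 * k * n ^ 2 - 3 * n ^ 3
      = -(n ^ 3 + (k - n) ^ 2 * (2 * n - k)) := by ring
  rw [factor, neg_nonpos]
  exact add_nonneg (pow_nonneg hn 3) (mul_nonneg (sq_nonneg _) (by linarith))

theorem dsloc_branch_le_ds_branch {n k : ℝ} (hnk : n < k) (hk : k ≤ 2 * n) :
    k ^ 2 * (k - n) / (2 * n ^ 2 + (k - n) * (3 * k - n))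
      ≤ n * k * (k - n) / (n ^ 2 + k * (k - n)) := by
  have hn : 0 < n := by linarith
  have hkn : 0 < k - n := sub_pos.mpr hnk
  have hd_loc : 0 < 2 * n ^ 2 + (k - n) * (3 * k - n) := by nlinarith
  have hk0 : 0 < k := by linarith
  have hd : 0 < n ^ 2 + k * (k - n) := by positivity
  rw [div_le_div_iff₀ hd_loc hd, ← sub_nonneg]
  have factor : n * k * (k - n) * (2 * n ^ 2 + (k - n) * (3 * k - n))
        - k ^ 2 * (k - n) * (n ^ 2 + k * (k - n))
      = k * (k - n) * -(k ^ 3 - 4 * k ^ 2 * n + 5 * k * n ^ 2 - 3 * n ^ 3) := by ring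
  rw [factor]
  exact mul_nonneg (mul_nonneg hk0.le hkn.le)
    (neg_nonneg.mpr (cubic_nonpos_of_le_of_le_two_mul hnk.le hk))

theorem dsloc_le_ds_general (N K : ℕ) :
    dsloc N K ≤ ds N K := by
  unfold dsloc ds
  split_ifs with h_le h_lt h_le_two h_le_two
  · exact le_rfl
  · exact dsloc_branch_le_ds_branch (by exact_mod_cast lt_of_not_ge h_le) (by exact_mod_cast h_le_two)
  · omega
  · obtain rfl : K = 2 * N := by omega
    have hN : (N : ℝ) ≠ 0 := by exact_mod_cast (show N ≠ 0 by omega)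
    refine le_of_eq ?_
    push_cast
    field_simp
    ring
  · exact le_rfl

/-- For N ≥ 1 and every K, d_s^loc(N,K) ≤ d_s(N,K). -/
theorem dsloc_le_ds (N K : ℕ) (hN : 1 ≤ N) :
    dsloc N K ≤ ds N K :=
  dsloc_le_ds_general N K
end

section
/- Let M, N be natural numbers with 1 ≤ N, N ≤ 2M and 2M ≤ 2N. Then M²(2M−N)/(4M² − 3MN + N²) ≤ N(2M−N)/(2M) (naturals cast to ℝ; note 4M² − 3MN + N² > 0). Equivalently, 2M³ ≤ 4M²N − 3MN² + N³ for M ≤ N. That is, the symmetric sum-SDoF point achieved per receiver by the coding scheme with only asymmetric output feedback (proof of Theorem 3) is dominated by the symmetric boundary point N(2M−N)/(2M) of the region of Theorem 1. -/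
/-! For `M ≤ N ≤ 2M` the claim reduces, after clearing the positive denominators and the
common factor `2M − N ≥ 0`, to `2M³ ≤ N (4M² − 3MN + N²)`; the gap between the two sides
factors as `(N − M)((N − M)² + M²)`, which is nonnegative exactly when `M ≤ N`. -/

section

variable {K : Type*} [Field K] [LinearOrder K] [IsStrictOrderedRing K] {m n : K}

theorem four_mul_sq_sub_three_mul_add_sq_pos (hn : 0 < n) :
    0 < 4 * m ^ 2 - 3 * m * n + n ^ 2 := by
  have hsq : 16 * (4 * m ^ 2 - 3 * m * n + n ^ 2) = (8 * m - 3 * n) ^ 2 + 7 * n ^ 2 := by ring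
  nlinarith [sq_nonneg (8 * m - 3 * n), pow_pos hn 2]

theorem two_mul_cube_le_mul_four_mul_sq_sub_three_mul_add_sq (hmn : m ≤ n) :
    2 * m ^ 3 ≤ n * (4 * m ^ 2 - 3 * m * n + n ^ 2) := by
  have hgap : n * (4 * m ^ 2 - 3 * m * n + n ^ 2) - 2 * m ^ 3
      = (n - m) * ((n - m) ^ 2 + m ^ 2) := by ring
  have : 0 ≤ (n - m) * ((n - m) ^ 2 + m ^ 2) := by
    apply mul_nonneg (sub_nonneg.2 hmn); positivity
  linarith

theorem sq_mul_div_le_mul_div_two_mul (hm : 0 < m) (hmn : m ≤ n) (hn : n ≤ 2 * m) :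
    m ^ 2 * (2 * m - n) / (4 * m ^ 2 - 3 * m * n + n ^ 2) ≤ n * (2 * m - n) / (2 * m) := by
  have hD := four_mul_sq_sub_three_mul_add_sq_pos (m := m) (hm.trans_le hmn)
  rw [div_le_div_iff₀ hD (by positivity)]
  have key : 0 ≤ (2 * m - n) * (n * (4 * m ^ 2 - 3 * m * n + n ^ 2) - 2 * m ^ 3) :=
    mul_nonneg (sub_nonneg.2 hn)
      (sub_nonneg.2 (two_mul_cube_le_mul_four_mul_sq_sub_three_mul_add_sq hmn))
  linarith

end

/-- For 1 ≤ N, N ≤ 2M and 2M ≤ 2N, one has 4M² − 3MN + N² > 0 and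
M²(2M−N)/(4M² − 3MN + N²) ≤ N(2M−N)/(2M). -/
theorem asymmetric_feedback_loss (M N : ℕ) (hN : 1 ≤ N) (h1 : N ≤ 2 * M)
    (h2 : 2 * M ≤ 2 * N) :
    0 < 4 * (M : ℝ) ^ 2 - 3 * (M : ℝ) * (N : ℝ) + (N : ℝ) ^ 2 ∧
    (M : ℝ) ^ 2 * (2 * (M : ℝ) - (N : ℝ)) /
        (4 * (M : ℝ) ^ 2 - 3 * (M : ℝ) * (N : ℝ) + (N : ℝ) ^ 2) ≤
      (N : ℝ) * (2 * (M : ℝ) - (N : ℝ)) / (2 * (M : ℝ)) := by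
  have hM : (0 : ℝ) < M := by exact_mod_cast (show 0 < M by omega)
  have hMN : (M : ℝ) ≤ N := by exact_mod_cast (show M ≤ N by omega)
  have hN2M : (N : ℝ) ≤ 2 * M := by exact_mod_cast h1
  exact ⟨four_mul_sq_sub_three_mul_add_sq_pos (hM.trans_le hMN),
    sq_mul_div_le_mul_div_two_mul hM hMN hN2M⟩
end

section
/- Let M, N be natural numbers with 1 ≤ N < 2M, and set d = d_s(N,2M), m = min(2M,2N) (cast to ℝ), and p = d·m/(d+m). Then C_SDoF(M,N) equals the convex hull (over ℝ) of the four points (0,0), (d,0), (0,d), and (p,p). (Remark 1: the sum SDoF region of Theorem 1 is characterized fully by its three corner points (d_s(N,N,2M),0), (0,d_s(N,N,2M)) and the symmetric point, together with time-sharing.) -/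
/-!
The region is cut out by two half-planes that are swapped by the reflection `(x, y) ↦ (y, x)`,
and `0 < d ≤ m` makes it the kite with vertices `0`, `(d, 0)`, `(0, d)` and the point `(q, q)`
where the two boundary lines meet, `q = d m / (d + m)`. Conversely a point `(x, y)` of the region
with `y ≤ x` is `((x - y) / d) • (d, 0) + (y / q) • (q, q)`, and `1 / q = 1 / d + 1 / m` turns the
sum of the two weights into `x / d + y / m ≤ 1`.
-/

theorem ds_pos {N K : ℕ} (hN : 0 < N) (hK : N < K) : 0 < ds N K := by
  have hN' : (0 : ℝ) < N := by exact_mod_cast hN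
  have hK' : (N : ℝ) < K := by exact_mod_cast hK
  rw [ds, if_neg hK.not_ge]
  split_ifs
  · have hKN : (0 : ℝ) < K - N := by linarith
    exact div_pos (mul_pos (mul_pos hN' (hN'.trans hK')) hKN) (by positivity)
  · linarith

theorem ds_le_min (N K : ℕ) : ds N K ≤ min (K : ℝ) (2 * N) := by
  rw [ds]
  split_ifs with h₁ h₂
  · positivity
  · have hK : (N : ℝ) < K := by exact_mod_cast not_le.mp h₁
    have hK2 : (K : ℝ) ≤ 2 * N := by exact_mod_cast h₂
    have hN : (0 : ℝ) ≤ N := N.cast_nonneg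
    have hden : 0 < (N : ℝ) ^ 2 + K * (K - N) := by nlinarith
    rw [min_eq_left hK2, div_le_iff₀ hden]
    nlinarith [mul_nonneg (mul_nonneg hN hN) (sub_nonneg.mpr hK.le), sq_nonneg ((K : ℝ) - N)]
  · have hK : (2 * N : ℝ) < K := by exact_mod_cast not_le.mp h₂
    rw [min_eq_right hK.le]
    linarith [(N.cast_nonneg : (0 : ℝ) ≤ N)]

theorem Convex.smul_add_smul_mem_of_zero_mem {E : Type*} [AddCommGroup E] [Module ℝ E]
    {s : Set E} (hs : Convex ℝ s) (h₀ : (0 : E) ∈ s) {u v : E} (hu : u ∈ s) (hv : v ∈ s)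
    {a b : ℝ} (ha : 0 ≤ a) (hb : 0 ≤ b) (hab : a + b ≤ 1) : a • u + b • v ∈ s := by
  rcases (add_nonneg ha hb).eq_or_lt with hzero | hpos
  · obtain ⟨rfl, rfl⟩ : a = 0 ∧ b = 0 := ⟨by linarith, by linarith⟩
    simpa using h₀
  have hcomb : (a / (a + b)) • u + (b / (a + b)) • v ∈ s :=
    hs hu hv (by positivity) (by positivity) (by field_simp)
  convert hs.smul_mem_of_zero_mem h₀ hcomb ⟨hpos.le, hab⟩ using 1
  rw [smul_add, smul_smul, smul_smul, mul_div_cancel₀ _ hpos.ne', mul_div_cancel₀ _ hpos.ne']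

def kite (d m : ℝ) : Set (ℝ × ℝ) :=
  {p | 0 ≤ p.1 ∧ 0 ≤ p.2 ∧ p.1 / d + p.2 / m ≤ 1 ∧ p.1 / m + p.2 / d ≤ 1}

theorem convex_kite (d m : ℝ) : Convex ℝ (kite d m) := by
  intro u ⟨hu₁, hu₂, hu₃, hu₄⟩ v ⟨hv₁, hv₂, hv₃, hv₄⟩ a b ha hb hab
  simp only [kite, Set.mem_ofPred_eq, Prod.fst_add, Prod.snd_add, Prod.smul_fst, Prod.smul_snd,
    smul_eq_mul]
  refine ⟨by positivity, by positivity, ?_, ?_⟩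
  · calc (a * u.1 + b * v.1) / d + (a * u.2 + b * v.2) / m
          = a * (u.1 / d + u.2 / m) + b * (v.1 / d + v.2 / m) := by ring
      _ ≤ a * 1 + b * 1 := by gcongr
      _ = 1 := by rw [mul_one, mul_one, hab]
  · calc (a * u.1 + b * v.1) / m + (a * u.2 + b * v.2) / d
          = a * (u.1 / m + u.2 / d) + b * (v.1 / m + v.2 / d) := by ring
      _ ≤ a * 1 + b * 1 := by gcongr
      _ = 1 := by rw [mul_one, mul_one, hab]

theorem kite_eq_convexHull {d m : ℝ} (hd : 0 < d) (hdm : d ≤ m) :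
    kite d m = convexHull ℝ
      ({((0 : ℝ), (0 : ℝ)), (d, 0), (0, d), (d * m / (d + m), d * m / (d + m))} : Set (ℝ × ℝ)) := by
  set q := d * m / (d + m)
  have hm : 0 < m := hd.trans_le hdm
  have hq : 0 < q := by positivity
  have hq_inv : ∀ t, t / q = t / d + t / m := fun t => by simp only [q]; field_simp; ring
  set H := convexHull ℝ
      ({((0 : ℝ), (0 : ℝ)), (d, 0), (0, d), (q, q)} : Set (ℝ × ℝ))
  have hH : Convex ℝ H := convex_convexHull ℝ _
  have h₀ : ((0 : ℝ), (0 : ℝ)) ∈ H := subset_convexHull _ _ (by simp)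
  have h₁ : (d, (0 : ℝ)) ∈ H := subset_convexHull _ _ (by simp)
  have h₂ : ((0 : ℝ), d) ∈ H := subset_convexHull _ _ (by simp)
  have h₃ : (q, q) ∈ H := subset_convexHull _ _ (by simp)
  apply subset_antisymm
  · rintro ⟨x, y⟩ ⟨hx, hy, hxy, hyx⟩
    rcases le_total y x with hle | hle
    · convert hH.smul_add_smul_mem_of_zero_mem h₀ h₁ h₃ (a := (x - y) / d) (b := y / q)
        (div_nonneg (by linarith) hd.le) (div_nonneg hy hq.le)
        (by rw [hq_inv, sub_div]; linarith) using 1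
      ext <;> simp [div_mul_cancel₀ _ hd.ne', div_mul_cancel₀ _ hq.ne']
    · convert hH.smul_add_smul_mem_of_zero_mem h₀ h₂ h₃ (a := (y - x) / d) (b := x / q)
        (div_nonneg (by linarith) hd.le) (div_nonneg hx hq.le)
        (by rw [hq_inv, sub_div]; linarith) using 1
      ext <;> simp [div_mul_cancel₀ _ hd.ne', div_mul_cancel₀ _ hq.ne']
  · refine convexHull_min ?_ (convex_kite d m)
    have hdm' : d / m ≤ 1 := (div_le_one hm).mpr hdm
    have hqq : q / d + q / m = 1 := by rw [← hq_inv, div_self hq.ne']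
    rintro _ (rfl | rfl | rfl | rfl)
    · simp [kite]
    · simp [kite, hd.le, hd.ne', hdm']
    · simp [kite, hd.le, hd.ne', hdm']
    · exact ⟨hq.le, hq.le, hqq.le, by rw [add_comm]; exact hqq.le⟩

/-- For 1 ≤ N < 2M, with d = d_s(N,2M), m = min(2M,2N) and
p = d·m/(d+m), the region C_SDoF(M,N) equals the convex hull of
(0,0), (d,0), (0,d) and (p,p). -/
theorem CSDoF_eq_convexHull (M N : ℕ) (hN : 1 ≤ N) (hM : N < 2 * M) :
    CSDoF M N = convexHull ℝ
      ({((0 : ℝ), (0 : ℝ)), (ds N (2 * M), 0), (0, ds N (2 * M)),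
        (ds N (2 * M) * min (2 * (M : ℝ)) (2 * (N : ℝ)) /
            (ds N (2 * M) + min (2 * (M : ℝ)) (2 * (N : ℝ))),
          ds N (2 * M) * min (2 * (M : ℝ)) (2 * (N : ℝ)) /
            (ds N (2 * M) + min (2 * (M : ℝ)) (2 * (N : ℝ))))} : Set (ℝ × ℝ)) := by
  have hK : ((2 * M : ℕ) : ℝ) = 2 * (M : ℝ) := by push_cast; rfl
  have hdm : ds N (2 * M) ≤ min (2 * (M : ℝ)) (2 * (N : ℝ)) := hK ▸ ds_le_min N (2 * M)
  exact kite_eq_convexHull (ds_pos hN hM) hdm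
end
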